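/- arXiv:2601.18594 — 6 statements merged into one kernel-verified Lean document; each statement's English description precedes it below -/
import Mathlib

section
/- Every poly-ℤ group is locally indicable: if G admits a subnormal series {1} = G_n ≤ ... ≤ G_0 = G with each quotient G_i/G_{i+1} isomorphic to ℤ, then every non-trivial finitely generated subgroup of G admits a surjective homomorphism onto ℤ. -/
/-- A group is poly-ℤ if it admits a subnormal series
`{1} = G_n ≤ ... ≤ G_0 = G` with each quotient `G_i/G_{i+1} ≅ ℤ`. -/
def IsPolyZ (G : Type*) [Group G] : Prop :=
  ∃ (n : ℕ) (s : Fin (n + 1) → Subgroup G),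
    s 0 = ⊤ ∧ s (Fin.last n) = ⊥ ∧
    ∀ i : Fin n, s i.succ ≤ s i.castSucc ∧
      ∃ f : (s i.castSucc) →* Multiplicative ℤ,
        Function.Surjective f ∧ f.ker = (s i.succ).subgroupOf (s i.castSucc)

/-- A group is locally indicable if every non-trivial finitely generated
subgroup surjects onto ℤ. -/
def LocallyIndicable (G : Type*) [Group G] : Prop :=
  ∀ H : Subgroup G, H ≠ ⊥ → H.FG →
    ∃ f : H →* Multiplicative ℤ, Function.Surjective f

/-- If a group admits a homomorphism to `ℤ` that is nontrivial on some element,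
then it admits a *surjective* homomorphism to `ℤ`. -/
lemma exists_surjective_of_nontrivial_hom {H : Type*} [Group H]
    (f : H →* Multiplicative ℤ) (x : H) (hx : f x ≠ 1) :
    ∃ g : H →* Multiplicative ℤ, Function.Surjective g := by
  -- the additive subgroup of values
  set A : AddSubgroup ℤ :=
    { carrier := Set.range fun y : H => (f y).toAdd
      zero_mem' := ⟨1, by simp⟩
      add_mem' := by rintro _ _ ⟨a, rfl⟩ ⟨b, rfl⟩; exact ⟨a * b, by simp⟩
      neg_mem' := by rintro _ ⟨a, rfl⟩; exact ⟨a⁻¹, by simp⟩ } with hA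
  obtain ⟨a, ha⟩ := Int.subgroup_cyclic A
  rw [← AddSubgroup.zmultiples_eq_closure] at ha
  have hmem : ∀ y : H, a ∣ (f y).toAdd := by
    intro y
    have : (f y).toAdd ∈ A := ⟨y, rfl⟩
    rw [ha, AddSubgroup.mem_zmultiples_iff] at this
    obtain ⟨k, hk⟩ := this
    exact ⟨k, by rw [← hk, smul_eq_mul, mul_comm]⟩
  have ha0 : a ≠ 0 := by
    rintro rfl
    apply hx
    have := hmem x
    simp only [zero_dvd_iff] at this
    have : (f x).toAdd = 0 := this
    exact Multiplicative.toAdd.injective this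
  have hamem : a ∈ A := by rw [ha]; exact AddSubgroup.mem_zmultiples a
  obtain ⟨x0, hx0⟩ := hamem
  refine ⟨{ toFun := fun y => Multiplicative.ofAdd ((f y).toAdd / a)
            map_one' := by simp
            map_mul' := by
              intro y z
              simp only [map_mul, toAdd_mul]
              rw [Int.add_ediv_of_dvd_left (hmem y), ofAdd_add] }, ?_⟩
  intro m
  refine ⟨x0 ^ (m.toAdd), ?_⟩
  simp only [MonoidHom.coe_mk, OneHom.coe_mk, map_zpow, toAdd_zpow, hx0]
  rw [Int.ediv_self ha0]
  rw [← ofAdd_zsmul, smul_eq_mul, mul_one, ofAdd_toAdd]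

theorem polyZ_implies_locallyIndicable (G : Type*) [Group G]
    (h : IsPolyZ G) : LocallyIndicable G := by
  obtain ⟨n, s, h0, hlast, hstep⟩ := h
  intro H hH _hfg
  suffices key2 : ∀ m : ℕ, m ≤ n → H ≤ s ⟨n - m, by omega⟩ →
      ∃ f : H →* Multiplicative ℤ, Function.Surjective f by
    refine key2 n le_rfl ?_
    have : (⟨n - n, by omega⟩ : Fin (n + 1)) = 0 := by ext; simp
    rw [this, h0]; exact le_top
  intro m
  induction m with
  | zero =>
    intro _ hle
    exfalso; apply hH
    have : (⟨n - 0, by omega⟩ : Fin (n + 1)) = Fin.last n := by ext; simp [Fin.last]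
    rw [this, hlast] at hle
    exact le_bot_iff.mp hle
  | succ m ih =>
    intro hm hle
    set i : Fin n := ⟨n - (m + 1), by omega⟩ with hi
    have hle' : H ≤ s i.castSucc := hle
    obtain ⟨hsub, f, hsurj, hker⟩ := hstep i
    set ι : H →* s i.castSucc := Subgroup.inclusion hle' with hι
    by_cases hc : ∀ x : H, f (ι x) = 1
    · refine ih (by omega) ?_
      have hsucc : i.succ = ⟨n - m, by omega⟩ := by ext; simp [hi]; omega
      rw [← hsucc]
      intro g hg
      have hk : ι ⟨g, hg⟩ ∈ f.ker := hc _
      rw [hker] at hk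
      exact hk
    · push_neg at hc
      obtain ⟨x, hx⟩ := hc
      exact exists_surjective_of_nontrivial_hom (f.comp ι) x hx
end

section
/- An extension of locally indicable groups is locally indicable: if N is a normal subgroup of G such that both N and G/N are locally indicable, then G is locally indicable. -/
theorem locallyIndicable_extension (G : Type*) [Group G] (N : Subgroup G)
    [N.Normal] (hN : LocallyIndicable N) (hQ : LocallyIndicable (G ⧸ N)) :
    LocallyIndicable G := by
  intro H hHbot hHfg
  have hHFG : Group.FG H := (Group.fg_iff_subgroup_fg H).mpr hHfg
  set π : G →* G ⧸ N := QuotientGroup.mk' N with hπ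
  by_cases hK : H.map π = ⊥
  · -- H ≤ N
    have hle : H ≤ N := by
      intro x hx
      have : π x ∈ H.map π := Subgroup.mem_map_of_mem π hx
      rw [hK, Subgroup.mem_bot] at this
      simpa [π, QuotientGroup.eq_one_iff] using this
    set H' : Subgroup N := H.subgroupOf N with hH'
    have e : H' ≃* H := Subgroup.subgroupOfEquivOfLe hle
    have hfg' : H'.FG := (Group.fg_iff_subgroup_fg H').mp
      (Group.fg_of_surjective (f := e.symm.toMonoidHom) e.symm.surjective)
    have hbot' : H' ≠ ⊥ := by
      obtain ⟨x, hx1⟩ := (Subgroup.ne_bot_iff_exists_ne_one).mp hHbot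
      intro h
      refine hx1 ?_
      have hmem : (⟨(x : G), hle x.2⟩ : N) ∈ H' := by
        exact Subgroup.mem_subgroupOf.mpr x.2
      rw [h, Subgroup.mem_bot] at hmem
      exact Subtype.ext (by simpa using congrArg Subtype.val hmem)
    obtain ⟨g, hg⟩ := hN H' hbot' hfg'
    exact ⟨g.comp e.symm.toMonoidHom, hg.comp e.symm.surjective⟩
  · have hKfg : (H.map π).FG := (Group.fg_iff_subgroup_fg _).mp
      (Group.fg_of_surjective (π.subgroupMap_surjective H))
    obtain ⟨g, hg⟩ := hQ (H.map π) hK hKfg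
    exact ⟨g.comp (π.subgroupMap H), hg.comp (π.subgroupMap_surjective H)⟩
end

section
/- If G is a bi-orderable group with bi-order <, then the set of formal power series over a ring R with well-ordered support (the Malcev–Neumann set R*_< G) is closed under the convolution product: the product of two elements with well-ordered support has well-ordered support, and for each group element only finitely many pairs contribute to its coefficient. -/
/-!
Under a bi-invariant order, `(a, b) ↦ a * b` is monotone in each variable, so the product of two
partially well-ordered sets, being the image of their partially well-ordered cartesian product, is
partially well-ordered; the support of the convolution lies in the product of the supports.
On the antidiagonal `a * b = g` the coordinates move in opposite directions, so no two of its
points are comparable coordinatewise, whereas every infinite subset of a product of partially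
well-ordered sets contains such a pair.
-/

open Pointwise

namespace Set

variable {α : Type*} [Mul α] {s t : Set α}

theorem IsPWO.mul_of_mulMono [Preorder α] [MulLeftMono α] [MulRightMono α]
    (hs : s.IsPWO) (ht : t.IsPWO) : (s * t).IsPWO := by
  rw [← image_mul_prod]
  exact (hs.prod ht).image_of_monotone (monotone_fst.mul' monotone_snd)

namespace MulAntidiagonal

variable [PartialOrder α] [IsLeftCancelMul α] [MulLeftMono α] [MulRightStrictMono α] {a : α}

theorem eq_of_fst_le_fst_of_snd_le_snd' {x y : mulAntidiagonal s t a}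
    (h₁ : (x : α × α).1 ≤ (y : α × α).1) (h₂ : (x : α × α).2 ≤ (y : α × α).2) : x = y := by
  have hxy : (x : α × α).1 * (x : α × α).2 = (y : α × α).1 * (y : α × α).2 :=
    x.2.2.2.trans y.2.2.2.symm
  have hfst : (x : α × α).1 = (y : α × α).1 := by
    refine h₁.eq_of_not_lt fun hlt => ?_
    exact (lt_of_lt_of_le (mul_lt_mul_left hlt _) (mul_le_mul_right h₂ _)).ne hxy
  exact Subtype.ext (Prod.ext hfst (mul_left_cancel (hfst ▸ hxy)))

theorem finite_of_isPWO' (hs : s.IsPWO) (ht : t.IsPWO) (a : α) :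
    (mulAntidiagonal s t a).Finite := by
  by_contra! h
  have h1 : (mulAntidiagonal s t a).PartiallyWellOrderedOn (Prod.fst ⁻¹'o (· ≤ ·)) :=
    fun f ↦ hs fun n ↦ ⟨_, (mem_mulAntidiagonal.1 (f n).2).1⟩
  have h2 : (mulAntidiagonal s t a).PartiallyWellOrderedOn (Prod.snd ⁻¹'o (· ≤ ·)) :=
    fun f ↦ ht fun n ↦ ⟨_, (mem_mulAntidiagonal.1 (f n).2).2.1⟩
  obtain ⟨g, hg⟩ := h1.exists_monotone_subseq fun n ↦ (h.natEmbedding _ n).2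
  obtain ⟨m, n, mn, h2'⟩ := h2 fun n ↦ h.natEmbedding _ _
  refine mn.ne (g.injective <| (h.natEmbedding _).injective ?_)
  exact eq_of_fst_le_fst_of_snd_le_snd' (hg _ _ mn.le) h2'

end MulAntidiagonal

end Set

theorem Function.support_convolution_subset {G R : Type*} [Group G]
    [NonUnitalNonAssocSemiring R] (r s : G → R) :
    support (fun g : G => ∑ᶠ h : G, r h * s (h⁻¹ * g)) ⊆ support r * support s := by
  intro g hg
  obtain ⟨h, hh⟩ : ∃ h : G, r h * s (h⁻¹ * g) ≠ 0 := by
    by_contra! hzero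
    exact hg (finsum_eq_zero_of_forall_eq_zero hzero)
  exact ⟨h, left_ne_zero_of_mul hh, h⁻¹ * g, right_ne_zero_of_mul hh, mul_inv_cancel_left h g⟩

/-- If `r` and `s` are formal series (coefficient functions) on a bi-ordered
group with well-ordered support, then for each `g` only finitely many pairs
contribute to the `g`-coefficient of the convolution, and the convolution has
well-ordered support. -/
theorem malcevNeumann_convolution_closed {G R : Type*} [Group G]
    [LinearOrder G] [CovariantClass G G (· * ·) (· < ·)]
    [CovariantClass G G (Function.swap (· * ·)) (· < ·)] [Ring R]
    (r s : G → R) (hr : (Function.support r).IsWF)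
    (hs : (Function.support s).IsWF) :
    (∀ g : G, {h : G | r h ≠ 0 ∧ s (h⁻¹ * g) ≠ 0}.Finite) ∧
    (Function.support fun g : G => ∑ᶠ h : G, r h * s (h⁻¹ * g)).IsWF := by
  have := covariantClass_le_of_lt G G (· * ·)
  have := covariantClass_le_of_lt G G (Function.swap (· * ·))
  refine ⟨fun g => ?_, ?_⟩
  · refine ((Set.MulAntidiagonal.finite_of_isPWO' hr.isPWO hs.isPWO g).image Prod.fst).subset ?_
    rintro h ⟨hrh, hsh⟩
    exact ⟨(h, h⁻¹ * g), ⟨hrh, hsh, mul_inv_cancel_left h g⟩, rfl⟩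
  · exact (hr.isPWO.mul_of_mulMono hs.isPWO).isWF.mono (Function.support_convolution_subset r s)
end

section
/- If A and B are well-ordered subsets (with respect to a bi-order <) of a bi-ordered group G, then the product set AB = {ab : a ∈ A, b ∈ B} is well-ordered, and for every g ∈ G there are only finitely many pairs (a,b) ∈ A × B with ab = g. -/
/-! A product of two well-ordered sets is the image of a partially well-ordered product under
the monotone map `(a, b) ↦ a * b`, hence partially well-ordered. If infinitely many pairs in
`A × B` had the same product, we could extract two of them `(a, b) ≠ (a', b')` with `a ≤ a'`
and `b ≤ b'`; strict monotonicity forces `a = a'` and cancellation `b = b'`. This is Mathlib's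
argument for commutative monoids, which never uses commutativity. -/

open Pointwise

namespace Set

variable {α : Type*} {s t : Set α}

theorem IsPWO.mul' [Mul α] [Preorder α] [MulLeftMono α] [MulRightMono α]
    (hs : s.IsPWO) (ht : t.IsPWO) : (s * t).IsPWO := by
  rw [← image_mul_prod]
  exact (hs.prod ht).image_of_monotone fun _ _ h => mul_le_mul' h.1 h.2

section Antidiagonal

variable [Mul α] [IsLeftCancelMul α] [PartialOrder α] [MulLeftMono α] [MulRightStrictMono α]
  {a : α}

theorem MulAntidiagonal.eq_of_fst_le_fst_of_snd_le_snd'_s12 {x y : α × α}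
    (hx : x ∈ mulAntidiagonal s t a) (hy : y ∈ mulAntidiagonal s t a)
    (h₁ : x.1 ≤ y.1) (h₂ : x.2 ≤ y.2) : x = y := by
  have hprod : x.1 * x.2 = y.1 * y.2 := hx.2.2.trans hy.2.2.symm
  have hfst : x.1 = y.1 := h₁.eq_of_not_lt fun hlt => (mul_lt_mul_of_lt_of_le hlt h₂).ne hprod
  rw [hfst] at hprod
  exact Prod.ext hfst (mul_left_cancel hprod)

theorem MulAntidiagonal.finite_of_isPWO'_s12 (hs : s.IsPWO) (ht : t.IsPWO) (a : α) :
    (mulAntidiagonal s t a).Finite := by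
  by_contra! h
  have h₁ : (mulAntidiagonal s t a).PartiallyWellOrderedOn (Prod.fst ⁻¹'o (· ≤ ·)) :=
    fun f ↦ hs fun n ↦ ⟨_, (f n).2.1⟩
  have h₂ : (mulAntidiagonal s t a).PartiallyWellOrderedOn (Prod.snd ⁻¹'o (· ≤ ·)) :=
    fun f ↦ ht fun n ↦ ⟨_, (f n).2.2.1⟩
  obtain ⟨g, hg⟩ := h₁.exists_monotone_subseq fun n ↦ (h.natEmbedding _ n).2
  obtain ⟨m, n, hmn, hle⟩ := h₂ fun n ↦ h.natEmbedding _ (g n)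
  refine hmn.ne (g.injective <| (h.natEmbedding _).injective <| Subtype.ext ?_)
  exact MulAntidiagonal.eq_of_fst_le_fst_of_snd_le_snd'_s12 (h.natEmbedding _ _).2
    (h.natEmbedding _ _).2 (hg _ _ hmn.le) hle

end Antidiagonal

end Set

theorem mul_wellOrdered_of_wellOrdered {G : Type*} [Group G] [LinearOrder G]
    [CovariantClass G G (· * ·) (· < ·)]
    [CovariantClass G G (Function.swap (· * ·)) (· < ·)]
    (A B : Set G) (hA : A.IsWF) (hB : B.IsWF) :
    (A * B).IsWF ∧
      ∀ g : G, {p : G × G | p.1 ∈ A ∧ p.2 ∈ B ∧ p.1 * p.2 = g}.Finite := by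
  have := mulLeftMono_of_mulLeftStrictMono G
  have := mulRightMono_of_mulRightStrictMono G
  exact ⟨(hA.isPWO.mul' hB.isPWO).isWF,
    Set.MulAntidiagonal.finite_of_isPWO'_s12 hA.isPWO hB.isPWO⟩
end

section
/- In the Malcev–Neumann ring K*_< G over a division ring K and bi-ordered group (G,<), any series of the form 1 - x, where x has well-ordered support contained in {g ∈ G : g > 1}, is invertible, with inverse the sum Σ_{n≥0} x^n. -/
/-!
Let `S` be the support of `x`. The support of `xⁿ` lies in `Sⁿ`, and by Neumann's lemma the
submonoid generated by `S` is well-ordered. Each `g` lies in `Sⁿ` for only finitely many `n`: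
writing `g = s * g'` with `s ∈ S` gives `g' < g`, so one can induct along the well-order, and
only finitely many `s ∈ S` have `s⁻¹ * g` in that well-ordered set. Hence `y = ∑ xⁿ` is a
well-defined series, multiplication by a series distributes over this locally finite sum, and
`(1 - x) * y = y - ∑ xⁿ⁺¹ = 1` telescopes; symmetrically for `y * (1 - x)`.
-/

/-- The Malcev–Neumann set: formal series over `K` indexed by `G` with
well-ordered support. -/
abbrev MNSeries (K G : Type*) [Zero K] [LinearOrder G] :=
  {f : G → K // (Function.support f).IsWF}

open Set Function Pointwise

theorem exists_ne_zero_of_finsum_ne_zero {α M : Type*} [AddCommMonoid M] {f : α → M}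
    (h : ∑ᶠ a, f a ≠ 0) : ∃ a, f a ≠ 0 := by
  by_contra! H
  exact h (finsum_eq_zero_of_forall_eq_zero H)

theorem finsum_comm_of_support_subset {α β M : Type*} [AddCommMonoid M] (φ : α → β → M)
    {s : Set α} (hs : s.Finite) (hφs : ∀ b, support (φ · b) ⊆ s)
    (hφ : ∀ a, (support (φ a)).Finite) :
    ∑ᶠ a, ∑ᶠ b, φ a b = ∑ᶠ b, ∑ᶠ a, φ a b := by
  have hsub : ∀ b, support (φ · b) ⊆ hs.toFinset := fun b => by simpa using hφs b
  rw [finsum_eq_sum_of_support_subset _ (s := hs.toFinset), sum_finsum_comm _ _ fun a _ => hφ a]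
  · simp_rw [finsum_eq_sum_of_support_subset _ (hsub _)]
  · intro a ha
    obtain ⟨b, hb⟩ := exists_ne_zero_of_finsum_ne_zero ha
    exact hsub b hb

theorem finsum_nat_eq_zero_add {M : Type*} [AddCommMonoid M] {u : ℕ → M}
    (hu : (support u).Finite) : ∑ᶠ n, u n = u 0 + ∑ᶠ n, u (n + 1) := by
  obtain ⟨N, hN⟩ := hu.bddAbove
  rw [finsum_eq_sum_of_support_subset u (s := Finset.range (N + 2)),
    finsum_eq_sum_of_support_subset (u <| · + 1) (s := Finset.range (N + 1)),
    Finset.sum_range_succ', add_comm]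
  · exact fun n hn => by simpa [Nat.lt_succ_iff] using Nat.le_of_succ_le (hN hn)
  · exact fun n hn => by simpa [Nat.lt_succ_iff] using (hN hn).trans N.le_succ

/-- Neumann's lemma; unlike `Set.IsPWO.submonoid_closure`, without commutativity. -/
theorem Set.IsPWO.submonoid_closure' {α : Type*} [Monoid α] [Preorder α] [MulLeftMono α]
    [MulRightMono α] {s : Set α} (hpos : ∀ x ∈ s, 1 ≤ x) (h : s.IsPWO) :
    IsPWO (Submonoid.closure s : Set α) := by
  rw [Submonoid.closure_eq_image_prod]
  refine (h.partiallyWellOrderedOn_sublistForall₂ (· ≤ ·)).image_of_monotone_on ?_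
  exact fun l1 _ l2 hl2 h12 => h12.prod_le_prod' fun x hx => hpos x <| hl2 x hx

namespace Set.IsWF

variable {G : Type*} [Group G] [LinearOrder G] [MulLeftStrictMono G] [MulRightStrictMono G]
  {S T : Set G}

theorem finite_setOf_mem_and_inv_mul_mem (hS : S.IsWF) (hT : T.IsWF) (g : G) :
    {s | s ∈ S ∧ s⁻¹ * g ∈ T}.Finite := by
  -- an infinite such set holds an increasing sequence `sₙ`, and then `sₙ⁻¹ * g` descends in `T`
  by_contra hinf
  let f : ℕ ↪ {s | s ∈ S ∧ s⁻¹ * g ∈ T} := Set.Infinite.natEmbedding _ hinf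
  obtain ⟨φ, hφ⟩ := (hS.mono fun s hs => hs.1).isPWO.exists_monotone_subseq
    (f := fun n => (f n : G)) (fun n => (f n).2)
  have hmono : StrictMono fun n => (f (φ n) : G) :=
    hφ.strictMono_of_injective (Subtype.val_injective.comp (f.injective.comp φ.injective))
  have hanti : StrictAnti fun n => (f (φ n) : G)⁻¹ * g :=
    fun m n hmn => mul_lt_mul_left (inv_lt_inv_iff.mpr (hmono hmn)) g
  exact isWF_iff_no_descending_seq.mp hT _ hanti fun n => (f (φ n)).2.2

theorem submonoid_closure (hS : S.IsWF) (hpos : ∀ s ∈ S, 1 < s) :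
    (Submonoid.closure S : Set G).IsWF :=
  have := mulLeftMono_of_mulLeftStrictMono G
  have := mulRightMono_of_mulRightStrictMono G
  (hS.isPWO.submonoid_closure' fun s hs => (hpos s hs).le).isWF

theorem finite_setOf_mem_pow (hS : S.IsWF) (hpos : ∀ s ∈ S, 1 < s) (g : G) :
    {n : ℕ | g ∈ S ^ n}.Finite := by
  -- `g ∈ S ^ (n + 1)` means `g = s * g'` with `g' ∈ S ^ n` and `g' < g`: induct along the
  -- well-ordered closure of `S`, using that only finitely many `s` are available.
  set U : Set G := (Submonoid.closure S : Set G)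
  have hpowU : ∀ n, S ^ n ⊆ U := fun n =>
    Submonoid.subset_closure.trans (Submonoid.closure_pow_le (s := S) (n := n))
  by_cases hg : g ∈ U
  swap
  · exact finite_empty.subset fun n hn => hg (hpowU n hn)
  refine WellFoundedOn.induction (P := fun g => {n : ℕ | g ∈ S ^ n}.Finite)
    (hS.submonoid_closure hpos) hg fun g _ ih => ?_
  have hA := hS.finite_setOf_mem_and_inv_mul_mem (hS.submonoid_closure hpos) g
  refine ((hA.biUnion fun s hs => (ih _ hs.2 ?_).image Nat.succ).insert 0).subset ?_
  · simpa using mul_lt_mul_left (inv_lt_one_iff_one_lt.mpr (hpos s hs.1)) g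
  · rintro (_ | n) hn
    · exact mem_insert 0 _
    · obtain ⟨s, hs, g', hg', rfl⟩ := (pow_succ' S n ▸ hn : g ∈ S * S ^ n)
      refine mem_insert_of_mem 0 (mem_biUnion (x := s) ⟨hs, ?_⟩ ⟨n, ?_, rfl⟩) <;>
        simp only [inv_mul_cancel_left]
      exacts [hpowU n hg', hg']

end Set.IsWF

namespace MNSeries

def MulIsConvolution (K G : Type*) [Semiring K] [LinearOrder G] [Group G]
    [Mul (MNSeries K G)] : Prop :=
  ∀ f g : MNSeries K G, ∀ x : G, (f * g).val x = ∑ᶠ h : G, f.val h * g.val (h⁻¹ * x)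

variable {K G : Type*} [Semiring K] [Group G] [LinearOrder G]

theorem support_mul_subset [Mul (MNSeries K G)] (hmul : MulIsConvolution K G)
    (f g : MNSeries K G) : support (f * g).val ⊆ support f.val * support g.val := by
  intro a ha
  rw [mem_support, hmul] at ha
  obtain ⟨h, hh⟩ := exists_ne_zero_of_finsum_ne_zero ha
  exact ⟨h, left_ne_zero_of_mul hh, h⁻¹ * a, right_ne_zero_of_mul hh, mul_inv_cancel_left h a⟩

theorem support_pow_subset [Monoid (MNSeries K G)] (hmul : MulIsConvolution K G)
    (hone : support (1 : MNSeries K G).val ⊆ 1) (x : MNSeries K G) :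
    ∀ n : ℕ, support (x ^ n).val ⊆ support x.val ^ n
  | 0 => by simpa using hone
  | n + 1 => by
    rw [pow_succ', pow_succ']
    exact (support_mul_subset hmul _ _).trans
      (mul_subset_mul_left (support_pow_subset hmul hone x n))

variable [MulLeftStrictMono G] [MulRightStrictMono G] [Mul (MNSeries K G)] {ι : Type*}

theorem val_mul_finsum (hmul : MulIsConvolution K G) (f v : MNSeries K G)
    (u : ι → MNSeries K G) {T : Set G} (hT : T.IsWF) (huT : ∀ i, support (u i).val ⊆ T)
    (hfin : ∀ g, (support fun i => (u i).val g).Finite)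
    (hv : ∀ g, v.val g = ∑ᶠ i, (u i).val g) (g : G) :
    (f * v).val g = ∑ᶠ i, (f * u i).val g := by
  rw [hmul, finsum_congr fun i => hmul f (u i) g]
  simp_rw [hv, mul_finsum' _ _ (hfin _)]
  refine finsum_comm_of_support_subset _ (f.2.finite_setOf_mem_and_inv_mul_mem hT g)
    (fun i h hh => ⟨left_ne_zero_of_mul hh, huT i (right_ne_zero_of_mul hh)⟩)
    (fun h => (hfin (h⁻¹ * g)).subset fun i hi => right_ne_zero_of_mul hi)

theorem val_finsum_mul (hmul : MulIsConvolution K G) (f v : MNSeries K G)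
    (u : ι → MNSeries K G) {T : Set G} (hT : T.IsWF) (huT : ∀ i, support (u i).val ⊆ T)
    (hfin : ∀ g, (support fun i => (u i).val g).Finite)
    (hv : ∀ g, v.val g = ∑ᶠ i, (u i).val g) (g : G) :
    (v * f).val g = ∑ᶠ i, (u i * f).val g := by
  rw [hmul, finsum_congr fun i => hmul (u i) f g]
  simp_rw [hv, finsum_mul' _ _ (hfin _)]
  refine finsum_comm_of_support_subset _ (hT.finite_setOf_mem_and_inv_mul_mem f.2 g)
    (fun i h hh => ⟨huT i (left_ne_zero_of_mul hh), right_ne_zero_of_mul hh⟩)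
    (fun h => (hfin h).subset fun i hi => left_ne_zero_of_mul hi)

end MNSeries

/-- In the Malcev–Neumann ring, `1 - x` is invertible whenever the support of
`x` lies in the positive cone, with inverse `∑ₙ xⁿ`. -/
theorem malcevNeumann_one_sub_invertible {K G : Type*} [DivisionRing K]
    [Group G] [LinearOrder G] [CovariantClass G G (· * ·) (· < ·)]
    [CovariantClass G G (Function.swap (· * ·)) (· < ·)]
    (inst : Ring (MNSeries K G))
    (hadd : ∀ f g : MNSeries K G, ∀ x : G, (f + g).val x = f.val x + g.val x)
    (hmul : ∀ f g : MNSeries K G, ∀ x : G,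
      (f * g).val x = ∑ᶠ h : G, f.val h * g.val (h⁻¹ * x))
    (hone : (1 : MNSeries K G).val = fun x : G => if x = 1 then 1 else 0)
    (x : MNSeries K G) (hx : ∀ g : G, x.val g ≠ 0 → 1 < g) :
    ∃ y : MNSeries K G,
      (∀ g : G, y.val g = ∑ᶠ n : ℕ, (x ^ n).val g) ∧
      (1 - x) * y = 1 ∧ y * (1 - x) = 1 := by
  have hsub (f g : MNSeries K G) : (f - g).val = f.val - g.val :=
    (AddMonoidHom.mk' (fun f : MNSeries K G => f.val) fun f g => funext (hadd f g)).map_sub f g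
  have hpow := MNSeries.support_pow_subset hmul (by simp [hone]) x
  have hWF := x.2.submonoid_closure hx
  have hpowU (n : ℕ) : support (x ^ n).val ⊆ Submonoid.closure (support x.val) :=
    (hpow n).trans (Submonoid.subset_closure.trans Submonoid.closure_pow_le)
  have hfin (g : G) : (support fun n => (x ^ n).val g).Finite :=
    (x.2.finite_setOf_mem_pow hx g).subset fun n hn => hpow n hn
  let y : MNSeries K G := ⟨fun g => ∑ᶠ n, (x ^ n).val g, hWF.mono fun g hg =>
    have ⟨n, hn⟩ := exists_ne_zero_of_finsum_ne_zero hg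
    hpowU n hn⟩
  have htelescope (g : G) : y.val g - ∑ᶠ n, (x ^ (n + 1)).val g = (1 : MNSeries K G).val g := by
    rw [show y.val g = _ from finsum_nat_eq_zero_add (hfin g), pow_zero, add_sub_cancel_right]
  refine ⟨y, fun _ => rfl, ?_, ?_⟩
  · rw [sub_mul, one_mul]
    ext g
    rw [hsub, Pi.sub_apply, MNSeries.val_mul_finsum hmul x y _ hWF hpowU hfin fun _ => rfl]
    simpa only [← pow_succ'] using htelescope g
  · rw [mul_sub, mul_one]
    ext g
    rw [hsub, Pi.sub_apply, MNSeries.val_finsum_mul hmul x y _ hWF hpowU hfin fun _ => rfl]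
    simpa only [← pow_succ] using htelescope g
end

section
/- Residually poly-ℤ groups are locally indicable: if G admits a chain of normal subgroups with trivial intersection whose quotients are poly-ℤ, then every non-trivial finitely generated subgroup of G surjects onto ℤ. -/
lemma surj_of_nontrivial_hom {K : Type*} [Group K] (φ : K →* Multiplicative ℤ)
    (h : ∃ k, φ k ≠ 1) : ∃ f : K →* Multiplicative ℤ, Function.Surjective f := by
  obtain ⟨k0, hk0⟩ := h
  set S : AddSubgroup ℤ :=
    { carrier := {x | Multiplicative.ofAdd x ∈ φ.range}
      zero_mem' := ⟨1, (map_one φ).trans rfl⟩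
      add_mem' := by
        rintro a b ⟨x, hx⟩ ⟨y, hy⟩
        exact ⟨x * y, by rw [map_mul, hx, hy]; rfl⟩
      neg_mem' := by
        rintro a ⟨x, hx⟩
        exact ⟨x⁻¹, by rw [map_inv, hx]; rfl⟩ } with hS
  obtain ⟨a, ha⟩ := Int.subgroup_cyclic S
  have hmem : ∀ k, a ∣ (φ k).toAdd := by
    intro k
    have hk : (φ k).toAdd ∈ S := ⟨k, rfl⟩
    rw [ha, AddSubgroup.mem_closure_singleton] at hk
    obtain ⟨c, hc⟩ := hk
    exact ⟨c, by rw [← hc, zsmul_eq_mul, Int.cast_id, mul_comm]⟩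
  have ha0 : a ≠ 0 := by
    intro h0
    apply hk0
    obtain ⟨c, hc⟩ := hmem k0
    have h1 : (φ k0).toAdd = 0 := by rw [hc, h0]; ring
    have := congrArg Multiplicative.ofAdd h1
    simpa using this
  refine ⟨{ toFun := fun k => Multiplicative.ofAdd ((φ k).toAdd / a)
            map_one' := by simp
            map_mul' := ?_ }, ?_⟩
  · intro x y
    obtain ⟨c, hc⟩ := hmem x
    obtain ⟨d, hd⟩ := hmem y
    have h1 : (φ (x * y)).toAdd = (φ x).toAdd + (φ y).toAdd := by rw [map_mul]; rfl
    show Multiplicative.ofAdd ((φ (x * y)).toAdd / a) =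
      Multiplicative.ofAdd ((φ x).toAdd / a) * Multiplicative.ofAdd ((φ y).toAdd / a)
    rw [h1, hc, hd, ← mul_add, Int.mul_ediv_cancel_left _ ha0,
      Int.mul_ediv_cancel_left _ ha0, Int.mul_ediv_cancel_left _ ha0]
    rfl
  · intro m
    have hma : a * m.toAdd ∈ S := by
      rw [ha, AddSubgroup.mem_closure_singleton]
      exact ⟨m.toAdd, by rw [zsmul_eq_mul, Int.cast_id, mul_comm]⟩
    obtain ⟨k, hk⟩ := hma
    refine ⟨k, ?_⟩
    have h1 : (φ k).toAdd = a * m.toAdd := by rw [hk]; rfl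
    show Multiplicative.ofAdd ((φ k).toAdd / a) = m
    rw [h1, Int.mul_ediv_cancel_left _ ha0]
    rfl

lemma polyZ_subgroup {Q : Type*} [Group Q] (hQ : IsPolyZ Q) (K : Subgroup Q)
    (hK : K ≠ ⊥) : ∃ f : K →* Multiplicative ℤ, Function.Surjective f := by
  obtain ⟨n, s, h0, hlast, hstep⟩ := hQ
  suffices h : ∀ m, ∀ hm : m ≤ n, K ≤ s ⟨n - m, by omega⟩ →
      ∃ f : K →* Multiplicative ℤ, Function.Surjective f by
    apply h n le_rfl
    have he : (⟨n - n, by omega⟩ : Fin (n + 1)) = 0 := by ext; simp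
    rw [he, h0]
    exact le_top
  intro m
  induction m with
  | zero =>
    intro _ hle
    exfalso
    apply hK
    have he : (⟨n - 0, by omega⟩ : Fin (n + 1)) = Fin.last n := by ext; simp
    rw [he, hlast] at hle
    exact le_bot_iff.mp hle
  | succ m ih =>
    intro hm hle
    have hlt : n - (m + 1) < n := by omega
    set i : Fin n := ⟨n - (m + 1), hlt⟩ with hi
    have hKle : K ≤ s i.castSucc := hle
    obtain ⟨hle', f, hfsurj, hker⟩ := hstep i
    set ψ := f.comp (Subgroup.inclusion hKle) with hψ
    by_cases hne : ∃ k, ψ k ≠ 1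
    · exact surj_of_nontrivial_hom ψ hne
    · push_neg at hne
      apply ih (by omega)
      have hs : i.succ = (⟨n - m, by omega⟩ : Fin (n + 1)) := by
        ext
        simp only [Fin.val_succ, hi]
        omega
      rw [← hs]
      intro x hx
      have h1 : ψ ⟨x, hx⟩ = 1 := hne _
      have h2 : Subgroup.inclusion hKle ⟨x, hx⟩ ∈ f.ker := h1
      rw [hker, Subgroup.mem_subgroupOf] at h2
      simpa using h2

theorem residually_polyZ_locallyIndicable {G : Type*} [Group G]
    (N : ℕ → Subgroup G) (hN0 : N 0 = ⊤) (hNanti : Antitone N)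
    (hNnorm : ∀ i, (N i).Normal) (hNres : ⨅ i, N i = ⊥)
    (hNpoly : ∀ i, ∃ _ : (N i).Normal, IsPolyZ (G ⧸ N i)) :
    LocallyIndicable G := by
  intro H hH _
  have hex : ∃ i, ¬ H ≤ N i := by
    by_contra hc
    push_neg at hc
    exact hH (le_bot_iff.mp (hNres ▸ le_iInf hc))
  obtain ⟨i, hi⟩ := hex
  rw [SetLike.not_le_iff_exists] at hi
  obtain ⟨x, hxH, hxN⟩ := hi
  set π := QuotientGroup.mk' (N i) with hπ
  set K := H.map π with hK
  have hKne : K ≠ ⊥ := by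
    intro hb
    apply hxN
    have : π x ∈ K := Subgroup.mem_map.mpr ⟨x, hxH, rfl⟩
    rw [hb, Subgroup.mem_bot] at this
    rwa [← QuotientGroup.ker_mk' (N i), MonoidHom.mem_ker]
  obtain ⟨_, hpoly⟩ := hNpoly i
  obtain ⟨g, hg⟩ := polyZ_subgroup hpoly K hKne
  refine ⟨g.comp ((π.comp H.subtype).codRestrict K
    (fun h => Subgroup.mem_map.mpr ⟨h, h.2, rfl⟩)), hg.comp ?_⟩
  rintro ⟨y, hy⟩
  rw [Subgroup.mem_map] at hy
  obtain ⟨z, hz, rfl⟩ := hy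
  exact ⟨⟨z, hz⟩, rfl⟩
end
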